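/- Every ideal K of the center Z of L satisfies K = (LK) ∩ Z, where LK denotes the two-sided ideal of L generated by K. (No assumption on the field k is needed.) -/

import Mathlib

/-!
Common setup: `q`-commutative power series ring `R = k_q[[x_1,…,x_n]]` and
`q`-commutative Laurent series ring `L = k_q[[x_1^{±1},…,x_n^{±1}]]`, characterized
by their coefficient descriptions (twisted convolution multiplication).
-/

noncomputable section

/-- A multiplicatively antisymmetric `n × n` matrix over `k`:
`q_{ii} = 1` and `q_{ij} q_{ji} = 1`. -/
structure QMatrix (k : Type*) [Field k] (n : ℕ) where
  q : Fin n → Fin n → k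
  diag : ∀ i, q i i = 1
  antisym : ∀ i j, q i j * q j i = 1

namespace QMatrix

variable {k : Type*} [Field k] {n : ℕ} (Q : QMatrix k n)

lemma q_ne_zero (i j : Fin n) : Q.q i j ≠ 0 := fun h0 => by
  have h1 := Q.antisym i j
  rw [h0, zero_mul] at h1
  exact zero_ne_one h1

/-- The twisting weight `∏_{1 ≤ j < i ≤ n} q_{ij}^{u_i v_j}` (natural exponents), so that
`x^u · x^v = weight u v · x^{u+v}` in `R`. -/
def weight (u v : Fin n →₀ ℕ) : k :=
  ∏ i : Fin n, ∏ j : Fin n, if j < i then Q.q i j ^ (u i * v j) else 1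

/-- The twisting weight `∏_{1 ≤ j < i ≤ n} q_{ij}^{u_i v_j}` (integer exponents), so that
`x^u · x^v = zweight u v · x^{u+v}` in `L`. -/
def zweight (u v : Fin n → ℤ) : k :=
  ∏ i : Fin n, ∏ j : Fin n, if j < i then Q.q i j ^ (u i * v j) else 1

/-- The alternating bicharacter `σ(s,t) = ∏_{i,j} q_{ij}^{s_i t_j}`, so that
`x^s x^t = σ(s,t) x^t x^s` in `L`. -/
def sigma (s t : Fin n → ℤ) : k :=
  ∏ i : Fin n, ∏ j : Fin n, Q.q i j ^ (s i * t j)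

end QMatrix

/-- `R` is (a model of) the `q`-commutative power series ring `k_q[[x_1, …, x_n]]`:
its underlying `k`-vector space is that of all families of coefficients indexed by `ℕ^n`,
the constant series `1` is the multiplicative unit, and multiplication is given by the
twisted convolution: the coefficient of `x^s` in `f·g` is
`∑_{u+v=s} f_u g_v ∏_{1≤j<i≤n} q_{ij}^{u_i v_j}`. -/
structure IsQPowerSeriesRing {k : Type*} [Field k] {n : ℕ} (Q : QMatrix k n)
    (R : Type*) [Ring R] [Algebra k R] where
  coeff : R ≃ₗ[k] ((Fin n →₀ ℕ) → k)
  coeff_one : ∀ s, coeff 1 s = if s = 0 then 1 else 0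
  coeff_mul : ∀ f g : R, ∀ s, coeff (f * g) s =
    ∑ uv ∈ Finset.HasAntidiagonal.antidiagonal s, coeff f uv.1 * coeff g uv.2 * Q.weight uv.1 uv.2

namespace IsQPowerSeriesRing

variable {k : Type*} [Field k] {n : ℕ} {Q : QMatrix k n}
variable {R : Type*} [Ring R] [Algebra k R] (h : IsQPowerSeriesRing Q R)

/-- The monic monomial `x^s` of `R`. -/
def mono (s : Fin n →₀ ℕ) : R :=
  h.coeff.symm (fun t => if t = s then 1 else 0)

/-- The variable `x_i` of `R`. -/
def X (i : Fin n) : R := h.mono (Finsupp.single i 1)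

/-- The augmentation ideal `J = ⟨x_1, …, x_n⟩` of `R`, as a two-sided ideal. -/
def Jideal : TwoSidedIdeal R := TwoSidedIdeal.span (Set.range h.X)

/-- For `w ⊆ {1,…,n}`, the two-sided ideal `J_w = ⟨x_i : i ∈ w⟩` of `R`. -/
def Jw (w : Finset (Fin n)) : TwoSidedIdeal R :=
  TwoSidedIdeal.span {r : R | ∃ i ∈ w, r = h.X i}

/-- The action of `θ ∈ H = (kˣ)^n` on `R`, determined by
`x^s ↦ θ_1^{s_1} ⋯ θ_n^{s_n} x^s` and applied coefficientwise to series. -/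
def hAct (θ : Fin n → kˣ) (f : R) : R :=
  h.coeff.symm (fun s => (∏ i, (θ i : k) ^ (s i)) * h.coeff f s)

/-- A two-sided ideal of `R` is `H`-stable if it is mapped to itself by every element
of the torus `H = (kˣ)^n`. -/
def IsHStable (I : TwoSidedIdeal R) : Prop :=
  ∀ θ : Fin n → kˣ, h.hAct θ '' (I : Set R) = (I : Set R)

end IsQPowerSeriesRing

/-- A coefficient family `c : ℤ^n → k` is Laurent-bounded if `c s = 0` whenever some
coordinate of `s` is sufficiently negative, i.e. `∃ N, min(s_1,…,s_n) < -N → c s = 0`. -/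
def LaurentBounded {k : Type*} [Field k] {n : ℕ} (c : (Fin n → ℤ) → k) : Prop :=
  ∃ N : ℕ, ∀ s : Fin n → ℤ, (∃ i, s i < -(N : ℤ)) → c s = 0

/-- `L` is (a model of) the `q`-commutative Laurent series ring
`k_q[[x_1^{±1}, …, x_n^{±1}]]`: its elements correspond, `k`-linearly, to the
Laurent-bounded coefficient families indexed by `ℤ^n`, the constant series `1` is the
multiplicative unit, and multiplication is given by the twisted convolution. -/
structure IsQLaurentSeriesRing {k : Type*} [Field k] {n : ℕ} (Q : QMatrix k n)
    (L : Type*) [Ring L] [Algebra k L] where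
  coeff : L →ₗ[k] ((Fin n → ℤ) → k)
  coeff_injective : Function.Injective coeff
  coeff_bounded : ∀ f, LaurentBounded (coeff f)
  coeff_surjective : ∀ c, LaurentBounded c → ∃ f, coeff f = c
  coeff_one : ∀ s, coeff 1 s = if s = 0 then 1 else 0
  mul_support_finite : ∀ f g : L, ∀ s : Fin n → ℤ,
    (Function.support fun u => coeff f u * coeff g (s - u) * Q.zweight u (s - u)).Finite
  coeff_mul : ∀ f g : L, ∀ s : Fin n → ℤ, coeff (f * g) s =
    ∑ᶠ u : Fin n → ℤ, coeff f u * coeff g (s - u) * Q.zweight u (s - u)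

namespace IsQLaurentSeriesRing

variable {k : Type*} [Field k] {n : ℕ} {Q : QMatrix k n}
variable {L : Type*} [Ring L] [Algebra k L] (h : IsQLaurentSeriesRing Q L)

/-- The action of `θ ∈ H = (kˣ)^n` on `L`, determined by
`x^s ↦ θ_1^{s_1} ⋯ θ_n^{s_n} x^s` and applied coefficientwise to series. -/
def hAct (θ : Fin n → kˣ) (f : L) : L :=
  Classical.choose (h.coeff_surjective
    (fun s => (∏ i, ((θ i ^ (s i) : kˣ) : k)) * h.coeff f s)
    (by
      obtain ⟨N, hN⟩ := h.coeff_bounded f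
      exact ⟨N, fun s hs => by simp only []; rw [hN s hs, mul_zero]⟩))

/-- A two-sided ideal of `L` is `H`-stable if it is mapped to itself by every element
of the torus `H = (kˣ)^n`. -/
def IsHStable (I : TwoSidedIdeal L) : Prop :=
  ∀ θ : Fin n → kˣ, h.hAct θ '' (I : Set L) = (I : Set L)

end IsQLaurentSeriesRing

/-- A two-sided ideal `P` of a (possibly noncommutative) ring `A` is prime if `P ≠ A`
and whenever `I, J` are two-sided ideals with `IJ ⊆ P`, then `I ⊆ P` or `J ⊆ P`. -/
def IsPrimeTwoSided {A : Type*} [Ring A] (P : TwoSidedIdeal A) : Prop :=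
  P ≠ ⊤ ∧ ∀ I J : TwoSidedIdeal A, (∀ a ∈ I, ∀ b ∈ J, a * b ∈ P) → I ≤ P ∨ J ≤ P


/-!
The coefficients of a Laurent series on the exponents `s` with `σ`-symmetric weight
(`zweight s t = zweight t s` for all `t`) form a subgroup, and a series is central exactly
when it is supported there. Truncating a series to these exponents is therefore an additive
retraction `E : L → Z` which is `Z`-linear. If `f = ∑ aᵢ kᵢ bᵢ` lies in `LK` and is central,
then `f = E f = ∑ E(aᵢ bᵢ) kᵢ ∈ K`.
-/

theorem TwoSidedIdeal.mem_span_val_image_iff_of_centerRetraction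
    {A : Type*} [Ring A] (E : A →+ Subring.center A)
    (hE_mul : ∀ (f : A) (z : Subring.center A), E (f * z) = E f * z)
    (hE_coe : ∀ z : Subring.center A, E z = z) (K : Ideal (Subring.center A))
    (z : Subring.center A) :
    (z : A) ∈ TwoSidedIdeal.span (Subtype.val '' (K : Set (Subring.center A))) ↔ z ∈ K := by
  refine ⟨fun hz => ?_, fun hz => TwoSidedIdeal.subset_span ⟨z, hz, rfl⟩⟩
  suffices hE : ∀ x ∈ TwoSidedIdeal.span (Subtype.val '' (K : Set (Subring.center A))),
      ∀ a b : A, E (a * x * b) ∈ K by simpa [hE_coe] using hE _ hz 1 1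
  intro x hx
  induction hx using TwoSidedIdeal.span_induction with
  | mem x hx =>
    obtain ⟨y, hy, rfl⟩ := hx
    intro a b
    rw [mul_assoc, ← Subring.mem_center_iff.mp y.2 b, ← mul_assoc, hE_mul]
    exact K.mul_mem_left _ hy
  | zero => simp
  | add x y _ _ hx hy =>
    exact fun a b => by simpa [mul_add, add_mul] using K.add_mem (hx a b) (hy a b)
  | neg x _ hx => exact fun a b => by simpa using K.neg_mem (hx a b)
  | left_absorb c x _ hx => exact fun a b => by simpa [mul_assoc] using hx (a * c) b
  | right_absorb c x _ hx => exact fun a b => by simpa [mul_assoc] using hx a (c * b)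

namespace QMatrix

variable {k : Type*} [Field k] {n : ℕ} (Q : QMatrix k n)

lemma zweight_ne_zero (u v : Fin n → ℤ) : Q.zweight u v ≠ 0 := by
  refine Finset.prod_ne_zero_iff.mpr fun i _ => Finset.prod_ne_zero_iff.mpr fun j _ => ?_
  split
  · exact zpow_ne_zero _ (Q.q_ne_zero i j)
  · exact one_ne_zero

lemma zweight_add_left (u v t : Fin n → ℤ) :
    Q.zweight (u + v) t = Q.zweight u t * Q.zweight v t := by
  simp only [zweight, ← Finset.prod_mul_distrib]
  refine Finset.prod_congr rfl fun i _ => Finset.prod_congr rfl fun j _ => ?_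
  split
  · rw [Pi.add_apply, add_mul, zpow_add₀ (Q.q_ne_zero i j)]
  · rw [one_mul]

lemma zweight_add_right (u v t : Fin n → ℤ) :
    Q.zweight t (u + v) = Q.zweight t u * Q.zweight t v := by
  simp only [zweight, ← Finset.prod_mul_distrib]
  refine Finset.prod_congr rfl fun i _ => Finset.prod_congr rfl fun j _ => ?_
  split
  · rw [Pi.add_apply, mul_add, zpow_add₀ (Q.q_ne_zero i j)]
  · rw [one_mul]

@[simp]
lemma zweight_zero_left (t : Fin n → ℤ) : Q.zweight 0 t = 1 := by
  simp [zweight]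

@[simp]
lemma zweight_zero_right (t : Fin n → ℤ) : Q.zweight t 0 = 1 := by
  simp [zweight]

lemma zweight_neg_left (u t : Fin n → ℤ) : Q.zweight (-u) t = (Q.zweight u t)⁻¹ :=
  eq_inv_of_mul_eq_one_left <| by rw [← zweight_add_left, neg_add_cancel, zweight_zero_left]

lemma zweight_neg_right (u t : Fin n → ℤ) : Q.zweight t (-u) = (Q.zweight t u)⁻¹ :=
  eq_inv_of_mul_eq_one_left <| by rw [← zweight_add_right, neg_add_cancel, zweight_zero_right]

def centralExponents : AddSubgroup (Fin n → ℤ) where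
  carrier := {s | ∀ t, Q.zweight s t = Q.zweight t s}
  zero_mem' t := by simp
  add_mem' ha hb t := by rw [zweight_add_left, zweight_add_right, ha t, hb t]
  neg_mem' ha t := by rw [zweight_neg_left, zweight_neg_right, ha t]

end QMatrix

namespace IsQLaurentSeriesRing

variable {k : Type*} [Field k] {n : ℕ} {Q : QMatrix k n}
variable {L : Type*} [Ring L] [Algebra k L] (h : IsQLaurentSeriesRing Q L)

lemma exists_coeff_eq_single (t : Fin n → ℤ) :
    ∃ f : L, h.coeff f = fun s => if s = t then 1 else 0 := by
  refine h.coeff_surjective _ ⟨Finset.univ.sup fun i => (t i).natAbs, fun s ⟨i, hi⟩ => ?_⟩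
  have hti : (t i).natAbs ≤ Finset.univ.sup fun j => (t j).natAbs :=
    Finset.le_sup (f := fun j => (t j).natAbs) (Finset.mem_univ i)
  have hst : s ≠ t := by rintro rfl; omega
  exact if_neg hst

def monomial (t : Fin n → ℤ) : L := (h.exists_coeff_eq_single t).choose

lemma coeff_monomial (t : Fin n → ℤ) :
    h.coeff (h.monomial t) = fun s => if s = t then 1 else 0 :=
  (h.exists_coeff_eq_single t).choose_spec

lemma coeff_mul_monomial (f : L) (t s : Fin n → ℤ) :
    h.coeff (f * h.monomial t) s = h.coeff f (s - t) * Q.zweight (s - t) t := by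
  rw [h.coeff_mul, finsum_eq_single _ (s - t)]
  · simp [coeff_monomial]
  · intro u hu
    have : s - u ≠ t := fun he => hu (by rw [← he, sub_sub_cancel])
    simp [coeff_monomial, this]

lemma coeff_monomial_mul (f : L) (t s : Fin n → ℤ) :
    h.coeff (h.monomial t * f) s = h.coeff f (s - t) * Q.zweight t (s - t) := by
  rw [h.coeff_mul, finsum_eq_single _ t]
  · simp [coeff_monomial]
  · intro u hu
    simp [coeff_monomial, hu]

lemma mem_centralExponents_of_coeff_ne_zero {z : L} (hz : z ∈ Subring.center L)
    {s : Fin n → ℤ} (hs : h.coeff z s ≠ 0) : s ∈ Q.centralExponents := by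
  intro t
  have hcomm := congrArg (h.coeff · (s + t)) (Subring.mem_center_iff.mp hz (h.monomial t))
  simp only [coeff_monomial_mul, coeff_mul_monomial, add_sub_cancel_right] at hcomm
  exact mul_left_cancel₀ hs hcomm.symm

lemma mem_center_of_coeff_support {f : L}
    (hf : ∀ s, h.coeff f s ≠ 0 → s ∈ Q.centralExponents) : f ∈ Subring.center L := by
  refine Subring.mem_center_iff.mpr fun g => h.coeff_injective (funext fun s => ?_)
  rw [h.coeff_mul, h.coeff_mul, ← finsum_comp_equiv (Equiv.subLeft s)]
  refine finsum_congr fun u => ?_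
  simp only [Equiv.subLeft_apply, sub_sub_cancel]
  by_cases hu : h.coeff f u = 0
  · simp [hu]
  · rw [hf u hu (s - u)]
    ring

lemma exists_coeff_eq_indicator (f : L) :
    ∃ g : L, h.coeff g = (Q.centralExponents : Set (Fin n → ℤ)).indicator (h.coeff f) := by
  obtain ⟨N, hN⟩ := h.coeff_bounded f
  exact h.coeff_surjective _ ⟨N, fun s hs => by simp [hN s hs]⟩

def centralPart (f : L) : L := (h.exists_coeff_eq_indicator f).choose

lemma coeff_centralPart (f : L) :
    h.coeff (h.centralPart f) = (Q.centralExponents : Set (Fin n → ℤ)).indicator (h.coeff f) :=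
  (h.exists_coeff_eq_indicator f).choose_spec

lemma centralPart_mem_center (f : L) : h.centralPart f ∈ Subring.center L := by
  refine h.mem_center_of_coeff_support fun s hs => ?_
  rw [coeff_centralPart] at hs
  exact Set.mem_of_indicator_ne_zero hs

lemma centralPart_add (f g : L) : h.centralPart (f + g) = h.centralPart f + h.centralPart g :=
  h.coeff_injective <| by simp only [map_add, coeff_centralPart, Set.indicator_add']

lemma centralPart_of_mem_center {z : L} (hz : z ∈ Subring.center L) : h.centralPart z = z := by
  refine h.coeff_injective (funext fun s => ?_)
  rw [coeff_centralPart, Set.indicator_apply_eq_self]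
  exact fun hs => not_not.mp fun hne => hs (h.mem_centralExponents_of_coeff_ne_zero hz hne)

lemma centralPart_mul_of_mem_center (f : L) {z : L} (hz : z ∈ Subring.center L) :
    h.centralPart (f * z) = h.centralPart f * z := by
  have hmem : ∀ s u, h.coeff z (s - u) ≠ 0 →
      (u ∈ Q.centralExponents ↔ s ∈ Q.centralExponents) := fun s u hsu => by
    have hc := h.mem_centralExponents_of_coeff_ne_zero hz hsu
    exact ⟨fun hu => by simpa using add_mem hu hc, fun hs => by simpa using sub_mem hs hc⟩
  refine h.coeff_injective (funext fun s => ?_)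
  rw [coeff_centralPart, h.coeff_mul]
  by_cases hs : s ∈ Q.centralExponents
  · rw [Set.indicator_of_mem (SetLike.mem_coe.mpr hs), h.coeff_mul]
    refine finsum_congr fun u => ?_
    by_cases hzu : h.coeff z (s - u) = 0
    · simp [hzu]
    · rw [coeff_centralPart, Set.indicator_of_mem (SetLike.mem_coe.mpr ((hmem s u hzu).2 hs))]
  · rw [Set.indicator_of_notMem (mt SetLike.mem_coe.mp hs)]
    refine (finsum_eq_zero_of_forall_eq_zero fun u => ?_).symm
    by_cases hzu : h.coeff z (s - u) = 0
    · simp [hzu]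
    · have hu : u ∉ (Q.centralExponents : Set (Fin n → ℤ)) := mt (hmem s u hzu).1 hs
      rw [coeff_centralPart, Set.indicator_of_notMem hu, zero_mul, zero_mul]

def centralProjection : L →+ Subring.center L where
  toFun f := ⟨h.centralPart f, h.centralPart_mem_center f⟩
  map_zero' := Subtype.ext <| by simpa using h.centralPart_of_mem_center (Subring.zero_mem _)
  map_add' f g := Subtype.ext (h.centralPart_add f g)

end IsQLaurentSeriesRing

theorem stmt_10_general {k : Type*} [Field k] {n : ℕ} (Q : QMatrix k n)
    (L : Type*) [Ring L] [Algebra k L] (h : IsQLaurentSeriesRing Q L)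
    (K : Ideal (Subring.center L)) :
    ∀ z : Subring.center L, z ∈ K ↔
      (z : L) ∈ TwoSidedIdeal.span (Subtype.val '' (K : Set (Subring.center L))) := fun z =>
  (TwoSidedIdeal.mem_span_val_image_iff_of_centerRetraction h.centralProjection
    (fun f z => Subtype.ext (h.centralPart_mul_of_mem_center f z.2))
    (fun z => Subtype.ext (h.centralPart_of_mem_center z.2)) K z).symm

/-- Every ideal `K` of the center `Z` of `L` satisfies
`K = (LK) ∩ Z`, where `LK` is the two-sided ideal of `L` generated by `K`.
(No assumption on the field `k` is needed.) -/
theorem stmt_10 {k : Type*} [Field k] {n : ℕ} (hn : 0 < n) (Q : QMatrix k n)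
    (L : Type*) [Ring L] [Algebra k L] (h : IsQLaurentSeriesRing Q L)
    (K : Ideal (Subring.center L)) :
    ∀ z : Subring.center L, z ∈ K ↔
      (z : L) ∈ TwoSidedIdeal.span (Subtype.val '' (K : Set (Subring.center L))) :=
  stmt_10_general Q L h K

end
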